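/- Let F be a field, n ≥ 1, let J_n be the n×n antidiagonal matrix with all antidiagonal entries equal to 1, and let u ∈ GL_{2n}(F) be the block matrix [[I_n, J_n],[0, I_n]]. Then: (a) for h₁, h₂ ∈ GL_n(F), the matrix u⁻¹·diag(h₁,h₂)·u is lower-triangular (as a 2n×2n matrix) if and only if there exist x₁, …, x_n ∈ F^× with h₁ = diag(x₁,…,x_n) and h₂ = diag(x_n,…,x₁), in which case u⁻¹·diag(h₁,h₂)·u equals the diagonal matrix diag(x₁,…,x_n,x_n,…,x₁); (b) every M ∈ M_{2n}(F) can be written as M = diag(A,B) + u L u⁻¹ where A, B ∈ M_n(F) and L ∈ M_{2n}(F) is lower-triangular. (Part (a) computes the stabiliser of the point u in the full flag variety of GL_{2n} under the block-diagonal GL_n × GL_n, and part (b) expresses that the orbit of this point is open.) -/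
import Mathlib

open Matrix

/-- A `2n × 2n` matrix indexed by `Fin n ⊕ Fin n` (with `inl < inr`) is lower-triangular
if both diagonal blocks are lower-triangular and the upper-right block vanishes. -/
def IsLowerTriSum {F : Type*} [Field F] {n : ℕ}
    (M : Matrix (Fin n ⊕ Fin n) (Fin n ⊕ Fin n) F) : Prop :=
  (∀ i j : Fin n, i < j → M (Sum.inl i) (Sum.inl j) = 0) ∧
  (∀ i j : Fin n, i < j → M (Sum.inr i) (Sum.inr j) = 0) ∧
  (∀ i j : Fin n, M (Sum.inl i) (Sum.inr j) = 0)

/-- The antidiagonal `n × n` matrix `J_n` of `1`s. -/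
def antidiagOnes (F : Type*) [Field F] (n : ℕ) : Matrix (Fin n) (Fin n) F :=
  Matrix.of fun i j => if (i : ℕ) + (j : ℕ) + 1 = n then 1 else 0

namespace Stmt11Aux

variable {F : Type*} [Field F] {n : ℕ}

lemma aux_iff (i j : Fin n) : (i : ℕ) + (j : ℕ) + 1 = n ↔ j = i.rev := by
  have hi := i.isLt; have hj := j.isLt
  rw [Fin.ext_iff, Fin.val_rev]
  omega

lemma J_apply (i j : Fin n) : antidiagOnes F n i j = if j = i.rev then 1 else 0 := by
  simp [antidiagOnes, aux_iff]

lemma J_mul_apply (A : Matrix (Fin n) (Fin n) F) (i j : Fin n) :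
    (antidiagOnes F n * A) i j = A i.rev j := by
  rw [mul_apply, Finset.sum_eq_single i.rev]
  · rw [J_apply]; simp
  · intro k _ hk; rw [J_apply]; simp [hk]
  · simp

lemma mul_J_apply (A : Matrix (Fin n) (Fin n) F) (i j : Fin n) :
    (A * antidiagOnes F n) i j = A i j.rev := by
  rw [mul_apply, Finset.sum_eq_single j.rev]
  · rw [J_apply]; simp
  · intro k _ hk
    rw [J_apply, if_neg, mul_zero]
    intro h; exact hk (by simp [h])
  · simp

lemma J_mul_J : antidiagOnes F n * antidiagOnes F n = 1 := by
  ext i j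
  rw [J_mul_apply, J_apply, Matrix.one_apply]
  congr 1
  simp [eq_comm, Fin.rev_eq_iff]

lemma u_inv : (Matrix.fromBlocks (1 : Matrix (Fin n) (Fin n) F) (antidiagOnes F n) 0 1)⁻¹ =
    Matrix.fromBlocks (1 : Matrix (Fin n) (Fin n) F) (-(antidiagOnes F n)) 0
      (1 : Matrix (Fin n) (Fin n) F) := by
  apply Matrix.inv_eq_right_inv
  simp [Matrix.fromBlocks_multiply, ← Matrix.fromBlocks_one]

lemma conj_eq (h₁ h₂ : Matrix (Fin n) (Fin n) F) :
    (Matrix.fromBlocks (1 : Matrix (Fin n) (Fin n) F) (antidiagOnes F n) 0 1)⁻¹ *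
      Matrix.fromBlocks h₁ 0 0 h₂ *
      Matrix.fromBlocks (1 : Matrix (Fin n) (Fin n) F) (antidiagOnes F n) 0 1 =
    Matrix.fromBlocks h₁ (h₁ * antidiagOnes F n - antidiagOnes F n * h₂) 0 h₂ := by
  rw [u_inv]
  simp [Matrix.fromBlocks_multiply, sub_eq_add_neg, Matrix.neg_mul]

lemma diag_comm (x : Fin n → F) :
    Matrix.diagonal x * antidiagOnes F n -
      antidiagOnes F n * Matrix.diagonal (fun i => x i.rev) = 0 := by
  ext i j
  rw [Matrix.sub_apply, mul_J_apply, J_mul_apply, Matrix.zero_apply]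
  by_cases hij : i = j.rev
  · subst hij
    simp [Matrix.diagonal_apply, Fin.rev_rev]
  · have h2 : i.rev ≠ j := by
      intro h; exact hij (by simp [← h])
    rw [Matrix.diagonal_apply_ne _ hij, Matrix.diagonal_apply_ne _ h2, sub_zero]

end Stmt11Aux

open Stmt11Aux in
/-- Let `u = [[1,J_n],[0,1]] ∈ GL_{2n}(F)`.
(a) For `h₁, h₂ ∈ GL_n(F)`, the matrix `u⁻¹ ⬝ diag(h₁,h₂) ⬝ u` is lower-triangular iff
`h₁ = diag(x₁,…,x_n)` and `h₂ = diag(x_n,…,x₁)` for some `x_i ∈ F^×`, in which case the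
conjugate equals `diag(x₁,…,x_n,x_n,…,x₁)`.
(b) Every `2n × 2n` matrix `M` can be written as `M = diag(A,B) + u L u⁻¹` with `L`
lower-triangular. -/
theorem stmt_11 (F : Type*) [Field F] (n : ℕ) (hn : 1 ≤ n) :
    (∀ h₁ h₂ : Matrix (Fin n) (Fin n) F, IsUnit h₁ → IsUnit h₂ →
      (IsLowerTriSum
        ((Matrix.fromBlocks (1 : Matrix (Fin n) (Fin n) F) (antidiagOnes F n) 0 1)⁻¹ *
          Matrix.fromBlocks h₁ 0 0 h₂ *
          Matrix.fromBlocks (1 : Matrix (Fin n) (Fin n) F) (antidiagOnes F n) 0 1) ↔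
        ∃ x : Fin n → F, (∀ i, x i ≠ 0) ∧
          h₁ = Matrix.diagonal x ∧ h₂ = Matrix.diagonal (fun i => x i.rev))) ∧
    (∀ (x : Fin n → F) (h₁ h₂ : Matrix (Fin n) (Fin n) F),
      h₁ = Matrix.diagonal x → h₂ = Matrix.diagonal (fun i => x i.rev) →
      (Matrix.fromBlocks (1 : Matrix (Fin n) (Fin n) F) (antidiagOnes F n) 0 1)⁻¹ *
          Matrix.fromBlocks h₁ 0 0 h₂ *
          Matrix.fromBlocks (1 : Matrix (Fin n) (Fin n) F) (antidiagOnes F n) 0 1 =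
        Matrix.fromBlocks (Matrix.diagonal x) 0 0 (Matrix.diagonal (fun i => x i.rev))) ∧
    (∀ M : Matrix (Fin n ⊕ Fin n) (Fin n ⊕ Fin n) F,
      ∃ (A B : Matrix (Fin n) (Fin n) F) (L : Matrix (Fin n ⊕ Fin n) (Fin n ⊕ Fin n) F),
        IsLowerTriSum L ∧
        M = Matrix.fromBlocks A 0 0 B +
          Matrix.fromBlocks (1 : Matrix (Fin n) (Fin n) F) (antidiagOnes F n) 0 1 * L *
            (Matrix.fromBlocks (1 : Matrix (Fin n) (Fin n) F) (antidiagOnes F n) 0 1)⁻¹) := by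
  set J : Matrix (Fin n) (Fin n) F := antidiagOnes F n with hJdef
  have hJJ : J * J = 1 := J_mul_J
  have key : ∀ (x : Fin n → F) (h₁ h₂ : Matrix (Fin n) (Fin n) F),
      h₁ = Matrix.diagonal x → h₂ = Matrix.diagonal (fun i => x i.rev) →
      (Matrix.fromBlocks (1 : Matrix (Fin n) (Fin n) F) (antidiagOnes F n) 0 1)⁻¹ *
          Matrix.fromBlocks h₁ 0 0 h₂ *
          Matrix.fromBlocks (1 : Matrix (Fin n) (Fin n) F) (antidiagOnes F n) 0 1 =
        Matrix.fromBlocks (Matrix.diagonal x) 0 0 (Matrix.diagonal (fun i => x i.rev)) := by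
    rintro x h₁ h₂ rfl rfl
    rw [conj_eq, diag_comm]
  refine ⟨?_, key, ?_⟩
  · intro h₁ h₂ hu1 hu2
    constructor
    · intro hlt
      rw [conj_eq] at hlt
      obtain ⟨t1, t2, t3⟩ := hlt
      simp only [Matrix.fromBlocks_apply₁₁, Matrix.fromBlocks_apply₂₂,
        Matrix.fromBlocks_apply₁₂] at t1 t2 t3
      have t3' : ∀ i j : Fin n, h₁ i j = h₂ i.rev j.rev := by
        intro i j
        have h := t3 i j.rev
        rw [Matrix.sub_apply, mul_J_apply, J_mul_apply, Fin.rev_rev] at h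
        exact sub_eq_zero.mp h
      have hd1 : h₁ = Matrix.diagonal (fun i => h₁ i i) := by
        ext i j
        rcases lt_trichotomy i j with h | h | h
        · rw [t1 i j h, Matrix.diagonal_apply_ne _ h.ne]
        · subst h; rw [Matrix.diagonal_apply_eq]
        · rw [Matrix.diagonal_apply_ne _ h.ne', t3' i j,
            t2 _ _ (Fin.rev_lt_rev.mpr h)]
      refine ⟨fun i => h₁ i i, ?_, hd1, ?_⟩
      · intro i hzero
        have hdet : IsUnit h₁.det := (Matrix.isUnit_iff_isUnit_det h₁).mp hu1
        rw [hd1, Matrix.det_diagonal] at hdet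
        rw [isUnit_iff_ne_zero] at hdet
        exact hdet (Finset.prod_eq_zero (Finset.mem_univ i) hzero)
      · ext i j
        have e : h₂ i j = h₁ i.rev j.rev := by
          have h := t3' i.rev j.rev
          rwa [Fin.rev_rev, Fin.rev_rev, eq_comm] at h
        rw [e]
        rcases eq_or_ne i j with rfl | hne
        · simp
        · rw [Matrix.diagonal_apply_ne _ hne]
          conv_lhs => rw [hd1]
          exact Matrix.diagonal_apply_ne _ (by simp [Fin.rev_inj, hne])
    · rintro ⟨x, hx, hh1, hh2⟩
      rw [key x h₁ h₂ hh1 hh2]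
      refine ⟨fun i j hij => ?_, fun i j hij => ?_, fun i j => ?_⟩
      · simp [Matrix.diagonal_apply_ne _ hij.ne]
      · simp [Matrix.diagonal_apply_ne _ hij.ne]
      · simp
  · intro M
    set P := M.toBlocks₁₁ with hP
    set Q := M.toBlocks₁₂ with hQ
    set R := M.toBlocks₂₁ with hR
    set S := M.toBlocks₂₂ with hS
    set B : Matrix (Fin n) (Fin n) F :=
      Matrix.of (fun i j =>
        if i < j then (R * J + S) i j else S i j - (Q * J) i.rev j.rev) with hBdef
    refine ⟨P - J * R - (J * (S - B) * J - Q * J), B,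
      Matrix.fromBlocks (J * (S - B) * J - Q * J) 0 R (R * J + S - B), ⟨?_, ?_, ?_⟩, ?_⟩
    · intro i j hij
      rw [Matrix.fromBlocks_apply₁₁, Matrix.sub_apply, mul_J_apply, J_mul_apply,
        Matrix.sub_apply, hBdef]
      rw [Matrix.of_apply, if_neg (by rw [Fin.rev_lt_rev]; exact hij.asymm)]
      rw [Fin.rev_rev, Fin.rev_rev]
      ring
    · intro i j hij
      rw [Matrix.fromBlocks_apply₂₂, Matrix.sub_apply, hBdef, Matrix.of_apply, if_pos hij]
      ring
    · intro i j
      rw [Matrix.fromBlocks_apply₁₂, Matrix.zero_apply]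
    · have k1 : J * (S - B) * J * J = J * (S - B) := by rw [mul_assoc, hJJ, mul_one]
      have k2 : Q * J * J = Q := by rw [mul_assoc, hJJ, mul_one]
      rw [u_inv, ← hJdef]
      conv_lhs => rw [← Matrix.fromBlocks_toBlocks M, ← hP, ← hQ, ← hR, ← hS]
      rw [Matrix.fromBlocks_multiply, Matrix.fromBlocks_multiply, Matrix.fromBlocks_add,
        Matrix.fromBlocks_inj]
      refine ⟨?_, ?_, ?_, ?_⟩
      · simp only [Matrix.one_mul, Matrix.mul_one, Matrix.zero_mul, Matrix.mul_zero,
          add_zero, zero_add]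
        abel
      · simp only [Matrix.one_mul, Matrix.mul_one, Matrix.zero_mul, Matrix.mul_zero,
          add_zero, zero_add]
        rw [Matrix.mul_neg, Matrix.add_mul, Matrix.sub_mul, k1, k2]
        noncomm_ring
      · simp
      · simp only [Matrix.one_mul, Matrix.mul_one, Matrix.zero_mul, Matrix.mul_zero,
          add_zero, zero_add]
        rw [Matrix.mul_neg]
        noncomm_ring
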